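/- arXiv:2106.01675 — 4 statements merged into one kernel-verified Lean document; each statement's English description precedes it below -/
import Mathlib

section
/- Let Ψ : ℝ → ℝ be a nonnegative convex function vanishing only at 0, with ∫ exp(-λΨ(t)) dt < ∞ for all λ > 0. Then the map R : (0,∞) → (0,∞) defined by R(λ) = (∫ Ψ(t) e^{-λΨ(t)} dt) / (∫ e^{-λΨ(t)} dt) satisfies lim_{λ→0⁺} R(λ) = ∞. -/
/-!
Write `Z(λ) = ∫ e^{-λΨ}` and `N(λ) = ∫ Ψ e^{-λΨ}`. For every level `K ≥ 0`, splitting the line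
into `{Ψ < K}` and its complement gives `N(λ) ≥ K (Z(λ) - |{Ψ < K}|)`, so `N/Z ≥ K/2` as soon as
`Z(λ) ≥ 2 |{Ψ < K}|`. Convexity together with `Ψ(±1) > 0 = Ψ(0)` makes `Ψ` grow at least linearly,
so the sublevel sets have finite measure; since they exhaust `ℝ`, `Z(λ) → ∞` as `λ → 0⁺`.
-/

open MeasureTheory Real Filter Set Topology
open scoped ENNReal

lemma ConvexOn.mul_le_map_smul {E : Type*} [AddCommGroup E] [Module ℝ E] {f : E → ℝ}
    (hf : ConvexOn ℝ univ f) (h0 : f 0 ≤ 0) {t : ℝ} (ht : 1 ≤ t) (x : E) :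
    t * f x ≤ f (t • x) := by
  have ht0 : 0 < t := by linarith
  have key := hf.2 (mem_univ (t • x)) (mem_univ 0) (inv_nonneg.2 ht0.le)
    (sub_nonneg.2 (inv_le_one_of_one_le₀ ht)) (add_sub_cancel _ _)
  rw [smul_zero, add_zero, inv_smul_smul₀ ht0.ne', smul_eq_mul, smul_eq_mul] at key
  have : f x ≤ t⁻¹ * f (t • x) := by nlinarith [inv_nonneg.2 ht0.le, inv_le_one_of_one_le₀ ht]
  calc t * f x ≤ t * (t⁻¹ * f (t • x)) := by gcongr
    _ = f (t • x) := by field_simp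

lemma ConvexOn.min_mul_abs_le {Ψ : ℝ → ℝ} (hΨ : ConvexOn ℝ univ Ψ) (h0 : Ψ 0 ≤ 0) {x : ℝ}
    (hx : 1 ≤ |x|) : min (Ψ 1) (Ψ (-1)) * |x| ≤ Ψ x := by
  rcases le_or_gt 0 x with hx0 | hx0
  · rw [abs_of_nonneg hx0] at hx ⊢
    calc min (Ψ 1) (Ψ (-1)) * x ≤ x * Ψ 1 := by nlinarith [min_le_left (Ψ 1) (Ψ (-1))]
      _ ≤ Ψ (x • 1) := hΨ.mul_le_map_smul h0 hx 1
      _ = Ψ x := by rw [smul_eq_mul, mul_one]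
  · rw [abs_of_neg hx0] at hx ⊢
    calc min (Ψ 1) (Ψ (-1)) * -x ≤ -x * Ψ (-1) := by nlinarith [min_le_right (Ψ 1) (Ψ (-1))]
      _ ≤ Ψ (-x • -1) := hΨ.mul_le_map_smul h0 hx (-1)
      _ = Ψ x := by rw [smul_eq_mul, neg_mul_neg, mul_one]

lemma ConvexOn.isBounded_setOf_lt {Ψ : ℝ → ℝ} (hΨ : ConvexOn ℝ univ Ψ) (h0 : Ψ 0 ≤ 0)
    (h1 : 0 < Ψ 1) (hm1 : 0 < Ψ (-1)) (K : ℝ) : Bornology.IsBounded {x | Ψ x < K} := by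
  set c := min (Ψ 1) (Ψ (-1))
  have hc : 0 < c := lt_min h1 hm1
  refine (Metric.isBounded_closedBall (x := (0 : ℝ)) (r := max 1 (K / c))).subset fun x hx => ?_
  rw [Metric.mem_closedBall, dist_zero_right, Real.norm_eq_abs]
  by_contra! hxr
  have hx1 : 1 ≤ |x| := (le_max_left _ _).trans hxr.le
  have hKc : K < c * |x| := by
    rw [← div_lt_iff₀' hc]; exact (le_max_right _ _).trans_lt hxr
  exact (hΨ.min_mul_abs_le h0 hx1).not_gt (hKc.trans' hx)

lemma mul_exp_neg_mul_le {l : ℝ} (hl : 0 < l) (y : ℝ) :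
    y * exp (-l * y) ≤ 2 / l * exp (-(l / 2) * y) := by
  have hu : l / 2 * y ≤ exp (l / 2 * y) := by linarith [add_one_le_exp (l / 2 * y)]
  have hsplit : exp (-l * y) = exp (-(l / 2) * y) * exp (-(l / 2) * y) := by
    rw [← exp_add]; ring_nf
  have hinv : exp (-(l / 2) * y) * exp (l / 2 * y) = 1 := by rw [← exp_add]; ring_nf; exact exp_zero
  rw [hsplit, ← mul_assoc]
  gcongr
  calc y * exp (-(l / 2) * y) = 2 / l * (l / 2 * y * exp (-(l / 2) * y)) := by field_simp
    _ ≤ 2 / l * (exp (l / 2 * y) * exp (-(l / 2) * y)) := by gcongr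
    _ = 2 / l := by rw [mul_comm (exp _), hinv, mul_one]

section

variable {α : Type*} [MeasurableSpace α] {μ : Measure α} {Ψ : α → ℝ}

lemma integrable_mul_exp_neg_mul (hΨ : ∀ x, 0 ≤ Ψ x) (hm : Measurable Ψ) {l : ℝ} (hl : 0 < l)
    (hint : Integrable (fun x => exp (-(l / 2) * Ψ x)) μ) :
    Integrable (fun x => Ψ x * exp (-l * Ψ x)) μ := by
  refine (hint.const_mul (2 / l)).mono' (by fun_prop) (ae_of_all _ fun x => ?_)
  rw [norm_of_nonneg (mul_nonneg (hΨ x) (exp_pos _).le)]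
  exact mul_exp_neg_mul_le hl (Ψ x)

lemma mul_sub_measureReal_le_integral_mul (hΨ : ∀ x, 0 ≤ Ψ x) (hm : Measurable Ψ) {g : α → ℝ}
    (hg0 : ∀ x, 0 ≤ g x) (hg1 : ∀ x, g x ≤ 1) (hg : Integrable g μ)
    (hΨg : Integrable (fun x => Ψ x * g x) μ) {K : ℝ} (hK : 0 ≤ K)
    (hfin : μ {x | Ψ x < K} ≠ ∞) :
    K * (∫ x, g x ∂μ - μ.real {x | Ψ x < K}) ≤ ∫ x, Ψ x * g x ∂μ := by
  set s := {x | Ψ x < K}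
  have hs : MeasurableSet s := measurableSet_lt hm measurable_const
  have hg_s : ∫ x in s, g x ∂μ ≤ μ.real s := by
    have := norm_setIntegral_le_of_norm_le_const (hfin.lt_top) fun x _ => by
      rw [norm_of_nonneg (hg0 x)]; exact hg1 x
    linarith [le_abs_self (∫ x in s, g x ∂μ), Real.norm_eq_abs (∫ x in s, g x ∂μ)]
  have hΨg_s : 0 ≤ ∫ x in s, Ψ x * g x ∂μ :=
    setIntegral_nonneg hs fun x _ => mul_nonneg (hΨ x) (hg0 x)
  have hΨg_sc : K * ∫ x in sᶜ, g x ∂μ ≤ ∫ x in sᶜ, Ψ x * g x ∂μ := by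
    rw [← integral_const_mul]
    refine setIntegral_mono_on (hg.integrableOn.const_mul K) hΨg.integrableOn hs.compl fun x hx => ?_
    exact mul_le_mul_of_nonneg_right (not_lt.1 hx) (hg0 x)
  rw [← integral_add_compl hs hg, ← integral_add_compl hs hΨg]
  nlinarith

lemma tendsto_integral_exp_neg_mul_nhdsGT_zero (hm : Measurable Ψ)
    (hfin : ∀ K, μ {x | Ψ x < K} ≠ ∞) (hμ : μ univ = ∞)
    (hint : ∀ l, 0 < l → Integrable (fun x => exp (-l * Ψ x)) μ) :
    Tendsto (fun l => ∫ x, exp (-l * Ψ x) ∂μ) (𝓝[>] 0) atTop := by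
  refine tendsto_atTop.2 fun M => ?_
  have hunion : ⋃ K : ℝ, {x | Ψ x < K} = univ :=
    eq_univ_of_forall fun x => mem_iUnion.2 ⟨Ψ x + 1, by simp⟩
  have hmono : Monotone fun K : ℝ => {x | Ψ x < K} := fun _ _ hK _ hx => lt_of_lt_of_le hx hK
  obtain ⟨K, hK⟩ : ∃ K, 2 * |M| < μ.real {x | Ψ x < K} := by
    have := tendsto_measure_iUnion_atTop (μ := μ) hmono
    rw [hunion, hμ] at this
    obtain ⟨K, hK⟩ := (this.eventually (lt_mem_nhds (ENNReal.ofReal_lt_top (r := 2 * |M|)))).exists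
    exact ⟨K, (ENNReal.ofReal_lt_iff_lt_toReal (by positivity) (hfin K)).1 hK⟩
  have hexp : ∀ᶠ l in 𝓝[>] (0 : ℝ), 1 / 2 < exp (-l * K) := by
    have : Tendsto (fun l : ℝ => exp (-l * K)) (𝓝 0) (𝓝 1) := by
      simpa using ((continuous_neg.mul continuous_const).rexp).tendsto (0 : ℝ)
    exact (this.mono_left nhdsWithin_le_nhds).eventually (lt_mem_nhds (by norm_num))
  filter_upwards [hexp, self_mem_nhdsWithin] with l hlK (hl : 0 < l)
  have hs : MeasurableSet {x | Ψ x < K} := measurableSet_lt hm measurable_const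
  have hlower : exp (-l * K) * μ.real {x | Ψ x < K} ≤ ∫ x, exp (-l * Ψ x) ∂μ :=
    (setIntegral_ge_of_const_le_real hs (hfin K)
      (fun x hx => exp_le_exp.2 (by nlinarith [hx.out.le])) (hint l hl).integrableOn).trans
      (setIntegral_le_integral (hint l hl) (ae_of_all _ fun x => (exp_pos _).le))
  nlinarith [le_abs_self M, abs_nonneg M]

lemma tendsto_integral_mul_exp_div_integral_exp_nhdsGT_zero (hΨ : ∀ x, 0 ≤ Ψ x)
    (hm : Measurable Ψ) (hfin : ∀ K, μ {x | Ψ x < K} ≠ ∞) (hμ : μ univ = ∞)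
    (hint : ∀ l, 0 < l → Integrable (fun x => exp (-l * Ψ x)) μ) :
    Tendsto (fun l => (∫ x, Ψ x * exp (-l * Ψ x) ∂μ) / ∫ x, exp (-l * Ψ x) ∂μ) (𝓝[>] 0)
      atTop := by
  refine tendsto_atTop.2 fun b => ?_
  set K := 2 * max b 0
  have hK : 0 ≤ K := by positivity
  set m := μ.real {x | Ψ x < K}
  filter_upwards [(tendsto_integral_exp_neg_mul_nhdsGT_zero hm hfin hμ hint).eventually_ge_atTop
    (max 1 (2 * m)), self_mem_nhdsWithin] with l hZ (hl : 0 < l)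
  have hnum := mul_sub_measureReal_le_integral_mul hΨ hm (fun x => (exp_pos (-l * Ψ x)).le)
    (fun x => exp_le_one_iff.2 (by nlinarith [hΨ x])) (hint l hl)
    (integrable_mul_exp_neg_mul hΨ hm hl (hint (l / 2) (by positivity))) hK (hfin K)
  have hZm : 2 * m ≤ ∫ x, exp (-l * Ψ x) ∂μ := (le_max_right _ _).trans hZ
  rw [le_div_iff₀ (by linarith [(le_max_left _ _).trans hZ])]
  calc b * ∫ x, exp (-l * Ψ x) ∂μ ≤ K / 2 * ∫ x, exp (-l * Ψ x) ∂μ := by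
        gcongr; exact (le_max_left b 0).trans_eq (by ring)
    _ ≤ K * (∫ x, exp (-l * Ψ x) ∂μ - m) := by nlinarith
    _ ≤ _ := hnum

end

theorem orlicz_ratio_tendsto_atTop_at_zero
    (Ψ : ℝ → ℝ)
    (hconv : ConvexOn ℝ Set.univ Ψ)
    (hnonneg : ∀ x, 0 ≤ Ψ x)
    (hzero : ∀ x, Ψ x = 0 ↔ x = 0)
    (hint : ∀ l : ℝ, 0 < l → Integrable (fun t => Real.exp (-l * Ψ t))) :
    Tendsto (fun l : ℝ =>
        (∫ t, Ψ t * Real.exp (-l * Ψ t)) / (∫ t, Real.exp (-l * Ψ t)))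
      (nhdsWithin 0 (Set.Ioi 0)) atTop := by
  have hpos : ∀ x ≠ 0, 0 < Ψ x := fun x hx => (hnonneg x).lt_of_ne' (mt (hzero x).1 hx)
  have hbdd := hconv.isBounded_setOf_lt ((hzero 0).2 rfl).le (hpos 1 one_ne_zero)
    (hpos (-1) (neg_ne_zero.2 one_ne_zero))
  have hcont : Continuous Ψ := continuousOn_univ.1 (hconv.continuousOn isOpen_univ)
  exact tendsto_integral_mul_exp_div_integral_exp_nhdsGT_zero hnonneg hcont.measurable
    (fun K => (hbdd K).measure_lt_top.ne) Real.volume_univ hint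
end

section
/- Let Ψ be an even Young function, fix a dimension n ≥ 2, and for t ∈ ℝ define the section S(t) = {y ∈ ℝ^{n-1} : Ψ(t) + Σᵢ Ψ(yᵢ) ≤ 1}. Then for all t, u ≥ 0 and θ ∈ (0,1), (1-θ)S(t) + θS(u) ⊆ S(Ψ⁻¹((1-θ)Ψ(t) + θΨ(u))), where Ψ⁻¹ is the inverse of the restriction of Ψ to ℝ≥0. -/
open MeasureTheory Real Set Pointwise

theorem orlicz_section_inclusion
    (n : ℕ) (hn : 2 ≤ n) (Ψ : ℝ → ℝ)
    (heven : ∀ x, Ψ (-x) = Ψ x)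
    (hconv : ConvexOn ℝ Set.univ Ψ)
    (hnonneg : ∀ x, 0 ≤ Ψ x)
    (hzero : ∀ x, Ψ x = 0 ↔ x = 0)
    (hmono : StrictMonoOn Ψ (Set.Ici 0))
    (invΨ : ℝ → ℝ)
    (hinv : ∀ s : ℝ, 0 ≤ s → 0 ≤ invΨ s ∧ Ψ (invΨ s) = s)
    (S : ℝ → Set (Fin (n - 1) → ℝ))
    (hS : ∀ t, S t = {y : Fin (n - 1) → ℝ | Ψ t + ∑ i, Ψ (y i) ≤ 1}) :
    ∀ t u θ : ℝ, 0 ≤ t → 0 ≤ u → θ ∈ Set.Ioo (0 : ℝ) 1 →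
      (1 - θ) • S t + θ • S u ⊆ S (invΨ ((1 - θ) * Ψ t + θ * Ψ u)) := by
  intro t u θ ht hu hθ z hz
  obtain ⟨θ0, θ1⟩ := hθ
  have h1θ : (0:ℝ) ≤ 1 - θ := by linarith
  rcases hz with ⟨x, hx, y, hy, rfl⟩
  obtain ⟨a, ha, rfl⟩ := hx
  obtain ⟨b, hb, rfl⟩ := hy
  rw [hS] at ha hb ⊢
  simp only [Set.mem_setOf_eq] at ha hb ⊢
  have hs : 0 ≤ (1 - θ) * Ψ t + θ * Ψ u := by
    have := hnonneg t; have := hnonneg u; positivity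
  rw [(hinv _ hs).2]
  have hsum : ∑ i, Ψ (((1 - θ) • a + θ • b) i)
      ≤ (1 - θ) * ∑ i, Ψ (a i) + θ * ∑ i, Ψ (b i) := by
    rw [Finset.mul_sum, Finset.mul_sum, ← Finset.sum_add_distrib]
    apply Finset.sum_le_sum
    intro i _
    have := hconv.2 (Set.mem_univ (a i)) (Set.mem_univ (b i)) h1θ θ0.le (by ring)
    simpa using this
  nlinarith [ha, hb]
end

section
/- Let Ψ be an even Young function with Ψ|_{ℝ≥0} strictly increasing, let f(t) = Vol_{n-1}({y ∈ ℝ^{n-1} : Ψ(t) + Σ Ψ(yᵢ) ≤ 1}) be the parallel section function of the Orlicz ball B_Ψⁿ. Then log f ∘ Ψ⁻¹ is concave on the interval [0,1] (where Ψ⁻¹ is the inverse of Ψ on ℝ≥0), i.e., for s₁,s₂ ∈ [0,1] and θ ∈ (0,1), f(Ψ⁻¹(s₁))^{1-θ} f(Ψ⁻¹(s₂))^θ ≤ f(Ψ⁻¹((1-θ)s₁ + θs₂)). -/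
/-
Write `V_d(c)` for the volume of `{y ∈ ℝ^d | ∑ Ψ (y i) ≤ c}`, so that `f (Ψ⁻¹ s) = V_{n-1}(1 - s)`
and the claim is that `V_d` is log-concave. Slicing off one coordinate gives
`V_{d+1}(c) = ∫ V_d(c - Ψ t) dt`; by convexity of `Ψ` and log-concavity of `V_d` (induction on `d`),
the three integrands for `a`, `b` and `(1 - θ) a + θ b` satisfy the hypothesis of the
one-dimensional Prékopa–Leindler inequality, which yields log-concavity of `V_{d+1}`.
Prékopa–Leindler on the line follows from the one-dimensional Brunn–Minkowski inequality applied
to superlevel sets, integrated by the layer-cake formula.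
-/

open MeasureTheory Real Set

open scoped Pointwise

theorem MeasurableSet.measure_eq_iSup_subtype_isCompact {α : Type*} [TopologicalSpace α]
    [MeasurableSpace α] {μ : Measure α} [μ.InnerRegular] {A : Set α} (hA : MeasurableSet A) :
    μ A = ⨆ K : {K : Set α // K ⊆ A ∧ IsCompact K}, μ (K : Set α) := by
  rw [hA.measure_eq_iSup_isCompact, iSup_subtype']
  simp [iSup_subtype, iSup_and]

namespace Real

/-- With `a = max A` and `b = min B`, the translates `A + b` and `a + B` lie in `A + B` and meet
only in `a + b`. -/
theorem volume_add_volume_le_volume_add_of_isCompact {A B : Set ℝ} (hA : IsCompact A)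
    (hB : IsCompact B) (hA₀ : A.Nonempty) (hB₀ : B.Nonempty) :
    volume A + volume B ≤ volume (A + B) := by
  set a := sSup A
  set b := sInf B
  have hmeet : (A + {b}) ∩ ({a} + B) ⊆ {a + b} := by
    rintro _ ⟨hxA, hxB⟩
    rw [add_singleton] at hxA
    rw [singleton_add] at hxB
    obtain ⟨x, hx, rfl⟩ := hxA
    obtain ⟨y, hy, hxy⟩ := hxB
    have hxa : x ≤ a := le_csSup hA.bddAbove hx
    have hby : b ≤ y := csInf_le hB.bddBelow hy
    simp only [mem_singleton_iff]
    linarith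
  calc volume A + volume B = volume (A + {b}) + volume ({a} + B) := by
        rw [add_singleton, image_add_right, measure_preimage_add_right, singleton_add,
          image_add_left, measure_preimage_add]
    _ = volume ((A + {b}) ∪ ({a} + B)) + volume ((A + {b}) ∩ ({a} + B)) :=
        (measure_union_add_inter _ (isCompact_singleton.add hB |>.isClosed.measurableSet)).symm
    _ ≤ volume (A + B) + 0 := by
        gcongr
        · exact union_subset (add_subset_add_left (singleton_subset_iff.2 (hB.sInf_mem hB₀)))
            (add_subset_add_right (singleton_subset_iff.2 (hA.sSup_mem hA₀)))
        · exact (measure_mono hmeet).trans (measure_singleton _).le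
    _ = volume (A + B) := add_zero _

theorem volume_add_volume_le_of_add_subset {A B C : Set ℝ} (hA : MeasurableSet A)
    (hB : MeasurableSet B) (hA₀ : A.Nonempty) (hB₀ : B.Nonempty) (hC : A + B ⊆ C) :
    volume A + volume B ≤ volume C := by
  obtain ⟨a, ha⟩ := hA₀
  obtain ⟨b, hb⟩ := hB₀
  have : Nonempty {K : Set ℝ // K ⊆ A ∧ IsCompact K} := ⟨⟨∅, empty_subset _, isCompact_empty⟩⟩
  have : Nonempty {K : Set ℝ // K ⊆ B ∧ IsCompact K} := ⟨⟨∅, empty_subset _, isCompact_empty⟩⟩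
  rw [hA.measure_eq_iSup_subtype_isCompact, hB.measure_eq_iSup_subtype_isCompact]
  refine ENNReal.iSup_add_iSup_le fun ⟨K, hKA, hK⟩ ⟨L, hLB, hL⟩ => ?_
  -- adjoining a point makes the compact sets nonempty without changing their measure
  calc volume K + volume L ≤ volume (insert a K) + volume (insert b L) := by
        gcongr <;> exact subset_insert _ _
    _ ≤ volume (insert a K + insert b L) :=
        volume_add_volume_le_volume_add_of_isCompact (hK.insert a) (hL.insert b)
          (insert_nonempty _ _) (insert_nonempty _ _)
    _ ≤ volume C :=
        measure_mono ((add_subset_add (insert_subset ha hKA) (insert_subset hb hLB)).trans hC)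

theorem brunn_minkowski {A B C : Set ℝ} {θ : ℝ} (hθ₀ : 0 ≤ θ) (hθ₁ : θ ≤ 1)
    (hA : MeasurableSet A) (hB : MeasurableSet B) (hA₀ : A.Nonempty) (hB₀ : B.Nonempty)
    (hC : (1 - θ) • A + θ • B ⊆ C) :
    ENNReal.ofReal (1 - θ) * volume A + ENNReal.ofReal θ * volume B ≤ volume C := by
  have hvol : ∀ (r : ℝ) (S : Set ℝ), 0 ≤ r → volume (r • S) = ENNReal.ofReal r * volume S :=
    fun r S hr => by rw [Measure.addHaar_smul, Module.finrank_self, pow_one, abs_of_nonneg hr]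
  rw [← hvol _ _ (sub_nonneg.2 hθ₁), ← hvol _ _ hθ₀]
  exact volume_add_volume_le_of_add_subset (hA.const_smul₀ _) (hB.const_smul₀ _)
    (hA₀.smul_set) (hB₀.smul_set) hC

end Real

theorem ENNReal.rpow_one_sub_mul_rpow_le {θ : ℝ} (hθ₀ : 0 < θ) (hθ₁ : θ < 1) (x y : ENNReal) :
    x ^ (1 - θ) * y ^ θ ≤ ENNReal.ofReal (1 - θ) * x + ENNReal.ofReal θ * y := by
  rcases eq_or_ne x ⊤ with rfl | hx
  · simp [ENNReal.mul_top, hθ₁]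
  rcases eq_or_ne y ⊤ with rfl | hy
  · simp [ENNReal.mul_top, hθ₀]
  lift x to NNReal using hx
  lift y to NNReal using hy
  have := NNReal.geom_mean_le_arith_mean2_weighted (1 - θ).toNNReal θ.toNNReal x y
    (by rw [← Real.toNNReal_add (by linarith) hθ₀.le]; simp)
  rw [Real.coe_toNNReal _ (by linarith), Real.coe_toNNReal _ hθ₀.le] at this
  rw [← ENNReal.coe_rpow_of_nonneg _ (by linarith), ← ENNReal.coe_rpow_of_nonneg _ hθ₀.le,
    ENNReal.ofReal, ENNReal.ofReal]
  exact_mod_cast this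

theorem MeasureTheory.lintegral_ofReal_eq_mul_lintegral_measure_lt {α : Type*} [MeasurableSpace α]
    {μ : Measure α} {f : α → ℝ} (hf₀ : 0 ≤ f) (hf : Measurable f) {c : ℝ} (hc : 0 < c) :
    ∫⁻ x, ENNReal.ofReal (f x) ∂μ = ENNReal.ofReal c * ∫⁻ s in Ioi 0, μ {x | s * c < f x} := by
  have hfc : ∀ x, f x = c * (f x / c) := fun x => (mul_div_cancel₀ _ hc.ne').symm
  simp_rw [← lt_div_iff₀ hc]
  rw [← lintegral_eq_lintegral_meas_lt μ
      (Filter.Eventually.of_forall fun x => div_nonneg (hf₀ x) hc.le) (hf.div_const c).aemeasurable,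
    ← lintegral_const_mul _ (hf.div_const c).ennreal_ofReal]
  simp_rw [← ENNReal.ofReal_mul hc.le, ← hfc]

theorem Real.rpow_one_sub_mul_rpow_self {s : ℝ} (hs : 0 < s) (θ : ℝ) :
    s ^ (1 - θ) * s ^ θ = s := by
  rw [← Real.rpow_add hs, sub_add_cancel, Real.rpow_one]

theorem Real.prekopa_leindler {f g h : ℝ → ℝ} {θ : ℝ} (hθ₀ : 0 < θ) (hθ₁ : θ < 1)
    (hf₀ : 0 ≤ f) (hg₀ : 0 ≤ g) (hf : Measurable f) (hg : Measurable g) (hh : Measurable h)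
    (hf_bdd : BddAbove (range f)) (hg_bdd : BddAbove (range g))
    (hfgh : ∀ u v, f u ^ (1 - θ) * g v ^ θ ≤ h ((1 - θ) * u + θ * v)) :
    (∫⁻ u, ENNReal.ofReal (f u)) ^ (1 - θ) * (∫⁻ u, ENNReal.ofReal (g u)) ^ θ ≤
      ∫⁻ u, ENNReal.ofReal (h u) := by
  have hθ₁' : 0 < 1 - θ := sub_pos.2 hθ₁
  obtain ⟨α, hα_def⟩ : ∃ α, α = ⨆ u, f u := ⟨_, rfl⟩
  obtain ⟨β, hβ_def⟩ : ∃ β, β = ⨆ u, g u := ⟨_, rfl⟩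
  have hfα (u : ℝ) : f u ≤ α := hα_def ▸ le_ciSup hf_bdd u
  have hgβ (u : ℝ) : g u ≤ β := hβ_def ▸ le_ciSup hg_bdd u
  rcases (hα_def ▸ Real.iSup_nonneg hf₀ : 0 ≤ α).eq_or_lt with hα | hα
  · have (u : ℝ) : ENNReal.ofReal (f u) = 0 := ENNReal.ofReal_of_nonpos (hα ▸ hfα u)
    simp [this, ENNReal.zero_rpow_of_pos hθ₁']
  rcases (hβ_def ▸ Real.iSup_nonneg hg₀ : 0 ≤ β).eq_or_lt with hβ | hβ
  · have (u : ℝ) : ENNReal.ofReal (g u) = 0 := ENNReal.ofReal_of_nonpos (hβ ▸ hgβ u)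
    simp [this, ENNReal.zero_rpow_of_pos hθ₀]
  set γ := α ^ (1 - θ) * β ^ θ
  have hγ : 0 < γ := by positivity
  have hh₀ : 0 ≤ h := fun w => by
    have := (mul_nonneg (rpow_nonneg (hf₀ w) _) (rpow_nonneg (hg₀ w) _)).trans (hfgh w w)
    rwa [← add_mul, sub_add_cancel, one_mul] at this
  -- the superlevel sets at the same relative height satisfy the Brunn–Minkowski hypothesis
  have hlevel : ∀ s ∈ Ioi (0 : ℝ),
      ENNReal.ofReal (1 - θ) * volume {u | s * α < f u} +
        ENNReal.ofReal θ * volume {u | s * β < g u} ≤ volume {u | s * γ < h u} := by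
    intro s (hs : 0 < s)
    rcases lt_or_ge s 1 with hs₁ | hs₁
    · obtain ⟨u₀, hu₀⟩ := exists_lt_of_lt_ciSup (b := s * α)
        (by rw [← hα_def]; exact mul_lt_of_lt_one_left hα hs₁)
      obtain ⟨v₀, hv₀⟩ := exists_lt_of_lt_ciSup (b := s * β)
        (by rw [← hβ_def]; exact mul_lt_of_lt_one_left hβ hs₁)
      refine brunn_minkowski hθ₀.le hθ₁.le (measurableSet_lt measurable_const hf)
        (measurableSet_lt measurable_const hg) ⟨u₀, hu₀⟩ ⟨v₀, hv₀⟩ ?_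
      rintro _ ⟨_, ⟨u, hu, rfl⟩, _, ⟨v, hv, rfl⟩, rfl⟩
      calc s * γ = (s ^ (1 - θ) * s ^ θ) * (α ^ (1 - θ) * β ^ θ) := by
            rw [rpow_one_sub_mul_rpow_self hs]
        _ = (s * α) ^ (1 - θ) * (s * β) ^ θ := by
            rw [Real.mul_rpow hs.le hα.le, Real.mul_rpow hs.le hβ.le]
            ring
        _ < f u ^ (1 - θ) * g v ^ θ := by
            gcongr
            exacts [hu, hv]
        _ ≤ h ((1 - θ) • u + θ • v) := hfgh u v
    · have hempty {φ : ℝ → ℝ} {M : ℝ} (hM : 0 < M) (hφ : ∀ u, φ u ≤ M) :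
          {u | s * M < φ u} = ∅ :=
        eq_empty_of_forall_notMem fun u (hu : s * M < φ u) => by
          nlinarith [hφ u, mul_le_mul_of_nonneg_right hs₁ hM.le]
      simp [hempty hα hfα, hempty hβ hgβ]
  have hanti {φ : ℝ → ℝ} {M : ℝ} (hM : 0 < M) : Antitone fun s => volume {u | s * M < φ u} :=
    fun s t hst => measure_mono fun u (hu : t * M < φ u) =>
      (mul_le_mul_of_nonneg_right hst hM.le).trans_lt hu
  calc (∫⁻ u, ENNReal.ofReal (f u)) ^ (1 - θ) * (∫⁻ u, ENNReal.ofReal (g u)) ^ θ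
      = ENNReal.ofReal γ * ((∫⁻ s in Ioi 0, volume {u | s * α < f u}) ^ (1 - θ) *
          (∫⁻ s in Ioi 0, volume {u | s * β < g u}) ^ θ) := by
        rw [lintegral_ofReal_eq_mul_lintegral_measure_lt hf₀ hf hα,
          lintegral_ofReal_eq_mul_lintegral_measure_lt hg₀ hg hβ,
          ENNReal.mul_rpow_of_nonneg _ _ hθ₁'.le, ENNReal.mul_rpow_of_nonneg _ _ hθ₀.le,
          ENNReal.ofReal_mul (by positivity), ENNReal.ofReal_rpow_of_pos hα,
          ENNReal.ofReal_rpow_of_pos hβ]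
        ring
    _ ≤ ENNReal.ofReal γ * (ENNReal.ofReal (1 - θ) * (∫⁻ s in Ioi 0, volume {u | s * α < f u}) +
          ENNReal.ofReal θ * ∫⁻ s in Ioi 0, volume {u | s * β < g u}) := by
        gcongr ENNReal.ofReal γ * ?_
        exact ENNReal.rpow_one_sub_mul_rpow_le hθ₀ hθ₁ _ _
    _ ≤ ENNReal.ofReal γ * ∫⁻ s in Ioi 0, volume {u | s * γ < h u} := by
        gcongr ENNReal.ofReal γ * ?_
        rw [← lintegral_const_mul _ (hanti hα).measurable,
          ← lintegral_const_mul _ (hanti hβ).measurable,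
          ← lintegral_add_left ((hanti hα).measurable.const_mul _)]
        exact setLIntegral_mono' measurableSet_Ioi hlevel
    _ = ∫⁻ u, ENNReal.ofReal (h u) :=
        (lintegral_ofReal_eq_mul_lintegral_measure_lt hh₀ hh hγ).symm

noncomputable def orliczBallVolume (Ψ : ℝ → ℝ) (d : ℕ) (c : ℝ) : ENNReal :=
  volume {y : Fin d → ℝ | ∑ i, Ψ (y i) ≤ c}

section OrliczBallVolume

variable {Ψ : ℝ → ℝ} {d : ℕ}

theorem orliczBallVolume_mono : Monotone (orliczBallVolume Ψ d) :=
  fun _ _ h => measure_mono fun _ hy => le_trans hy h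

theorem orliczBallVolume_of_neg (hΨ₀ : ∀ x, 0 ≤ Ψ x) {c : ℝ} (hc : c < 0) :
    orliczBallVolume Ψ d c = 0 := by
  refine measure_mono_null (fun y (hy : _ ≤ c) => ?_) measure_empty
  exact hc.not_ge ((Finset.sum_nonneg fun i _ => hΨ₀ (y i)).trans hy)

theorem orliczBallVolume_zero_of_nonneg {c : ℝ} (hc : 0 ≤ c) : orliczBallVolume Ψ 0 c = 1 := by
  simp [orliczBallVolume, hc, volume_pi]

theorem orliczBallVolume_ne_top (hΨ₀ : ∀ x, 0 ≤ Ψ x)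
    (hΨ_bdd : ∀ c, Bornology.IsBounded {x | Ψ x ≤ c}) (c : ℝ) : orliczBallVolume Ψ d c ≠ ⊤ := by
  refine ((Bornology.IsBounded.pi fun _ => hΨ_bdd c).subset fun y hy i _ => ?_).measure_lt_top.ne
  exact (Finset.single_le_sum (fun j _ => hΨ₀ (y j)) (Finset.mem_univ i)).trans hy

theorem orliczBallVolume_succ (hΨ : Measurable Ψ) (c : ℝ) :
    orliczBallVolume Ψ (d + 1) c = ∫⁻ t, orliczBallVolume Ψ d (c - Ψ t) := by
  have hS : MeasurableSet {p : ℝ × (Fin d → ℝ) | Ψ p.1 + ∑ j, Ψ (p.2 j) ≤ c} :=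
    measurableSet_le ((hΨ.comp measurable_fst).add (Finset.measurable_sum _ fun j _ =>
      hΨ.comp ((measurable_pi_apply j).comp measurable_snd))) measurable_const
  have hsplit : {y : Fin (d + 1) → ℝ | ∑ i, Ψ (y i) ≤ c} =
      MeasurableEquiv.piFinSuccAbove (fun _ => ℝ) 0 ⁻¹'
        {p : ℝ × (Fin d → ℝ) | Ψ p.1 + ∑ j, Ψ (p.2 j) ≤ c} := by
    ext y
    simp [Fin.sum_univ_succ, Fin.tail]
  rw [orliczBallVolume, hsplit, (volume_preserving_piFinSuccAbove (fun _ => ℝ) 0).measure_preimage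
    hS.nullMeasurableSet, Measure.volume_eq_prod, Measure.prod_apply hS]
  refine lintegral_congr fun t => congrArg volume (ext fun z => ?_)
  simp only [mem_preimage, mem_ofPred_eq]
  constructor <;> intro h <;> linarith

theorem orliczBallVolume_toReal_rpow_mul_rpow_le (hΨ : ConvexOn ℝ univ Ψ)
    (hΨ₀ : ∀ x, 0 ≤ Ψ x) (hΨ_bdd : ∀ c, Bornology.IsBounded {x | Ψ x ≤ c})
    {θ : ℝ} (hθ₀ : 0 < θ) (hθ₁ : θ < 1) (a b : ℝ) :
    (orliczBallVolume Ψ d a).toReal ^ (1 - θ) * (orliczBallVolume Ψ d b).toReal ^ θ ≤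
      (orliczBallVolume Ψ d ((1 - θ) * a + θ * b)).toReal := by
  have hθ₁' : 0 < 1 - θ := sub_pos.2 hθ₁
  induction d generalizing a b with
  | zero =>
    rcases lt_or_ge a 0 with ha | ha
    · simp [orliczBallVolume_of_neg hΨ₀ ha, Real.zero_rpow hθ₁'.ne']
    rcases lt_or_ge b 0 with hb | hb
    · simp [orliczBallVolume_of_neg hΨ₀ hb, Real.zero_rpow hθ₀.ne']
    rw [orliczBallVolume_zero_of_nonneg ha, orliczBallVolume_zero_of_nonneg hb,
      orliczBallVolume_zero_of_nonneg (by positivity)]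
    simp
  | succ d ih =>
    have hmono : Monotone fun c => (orliczBallVolume Ψ d c).toReal := fun _ _ h =>
      ENNReal.toReal_mono (orliczBallVolume_ne_top hΨ₀ hΨ_bdd _) (orliczBallVolume_mono h)
    have hΨm : Measurable Ψ := (continuousOn_univ.1 (hΨ.continuousOn isOpen_univ)).measurable
    set slice := fun c u => (orliczBallVolume Ψ d (c - Ψ u)).toReal
    have hslice_meas (c : ℝ) : Measurable (slice c) :=
      hmono.measurable.comp (measurable_const.sub hΨm)
    have hslice_bdd (c : ℝ) : BddAbove (range (slice c)) :=
      ⟨_, forall_mem_range.2 fun u => hmono (sub_le_self c (hΨ₀ u))⟩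
    have hslice_int (c : ℝ) : ∫⁻ u, ENNReal.ofReal (slice c u) = orliczBallVolume Ψ (d + 1) c := by
      simp_rw [slice, ENNReal.ofReal_toReal (orliczBallVolume_ne_top hΨ₀ hΨ_bdd _),
        orliczBallVolume_succ hΨm]
    have hPL := Real.prekopa_leindler hθ₀ hθ₁ (fun u => ENNReal.toReal_nonneg)
      (fun u => ENNReal.toReal_nonneg) (hslice_meas a) (hslice_meas b)
      (hslice_meas ((1 - θ) * a + θ * b)) (hslice_bdd a) (hslice_bdd b) fun u v => by
        refine (ih (a - Ψ u) (b - Ψ v)).trans (hmono ?_)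
        have := hΨ.2 (mem_univ u) (mem_univ v) hθ₁'.le hθ₀.le (sub_add_cancel 1 θ)
        simp only [smul_eq_mul] at this
        linarith
    rw [hslice_int, hslice_int, hslice_int] at hPL
    rw [ENNReal.toReal_rpow, ENNReal.toReal_rpow, ← ENNReal.toReal_mul]
    exact ENNReal.toReal_mono (orliczBallVolume_ne_top hΨ₀ hΨ_bdd _) hPL

end OrliczBallVolume

theorem isBounded_setOf_le_of_even_of_strictMonoOn {Ψ : ℝ → ℝ} (heven : ∀ x, Ψ (-x) = Ψ x)
    (hmono : StrictMonoOn Ψ (Ici 0)) (hΨ_unbdd : ∀ c, ∃ r, 0 ≤ r ∧ c ≤ Ψ r) (c : ℝ) :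
    Bornology.IsBounded {x | Ψ x ≤ c} := by
  obtain ⟨r, hr, hcr⟩ := hΨ_unbdd c
  refine (Metric.isBounded_Icc (-r) r).subset fun x (hx : Ψ x ≤ c) => ?_
  rw [mem_Icc, ← abs_le]
  by_contra! hrx
  have habs : Ψ |x| = Ψ x := by rcases abs_choice x with h | h <;> simp [h, heven]
  linarith [hmono hr (abs_nonneg x) hrx]

theorem orlicz_section_function_log_concave_general
    (n : ℕ) (Ψ : ℝ → ℝ)
    (heven : ∀ x, Ψ (-x) = Ψ x)
    (hconv : ConvexOn ℝ Set.univ Ψ)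
    (hnonneg : ∀ x, 0 ≤ Ψ x)
    (hmono : StrictMonoOn Ψ (Set.Ici 0))
    (invΨ : ℝ → ℝ)
    (hinv : ∀ s : ℝ, 0 ≤ s → 0 ≤ invΨ s ∧ Ψ (invΨ s) = s)
    (f : ℝ → ℝ)
    (hf : ∀ t, f t =
      (volume {y : Fin (n - 1) → ℝ | Ψ t + ∑ i, Ψ (y i) ≤ 1}).toReal) :
    ∀ s₁ s₂ θ : ℝ, s₁ ∈ Set.Icc (0 : ℝ) 1 → s₂ ∈ Set.Icc (0 : ℝ) 1 →
      θ ∈ Set.Ioo (0 : ℝ) 1 →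
      f (invΨ s₁) ^ (1 - θ) * f (invΨ s₂) ^ θ ≤
        f (invΨ ((1 - θ) * s₁ + θ * s₂)) := by
  intro s₁ s₂ θ hs₁ hs₂ hθ
  have hf_eq (t : ℝ) : f t = (orliczBallVolume Ψ (n - 1) (1 - Ψ t)).toReal := by
    simp_rw [hf, orliczBallVolume, le_sub_iff_add_le']
  have hΨ_bdd := isBounded_setOf_le_of_even_of_strictMonoOn heven hmono fun c =>
    ⟨invΨ (max c 0), (hinv _ (le_max_right c 0)).1,
      (le_max_left c 0).trans_eq (hinv _ (le_max_right c 0)).2.symm⟩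
  have hm : 0 ≤ (1 - θ) * s₁ + θ * s₂ := by nlinarith [hs₁.1, hs₂.1, hθ.1, hθ.2]
  rw [hf_eq, hf_eq, hf_eq, (hinv _ hs₁.1).2, (hinv _ hs₂.1).2, (hinv _ hm).2]
  convert orliczBallVolume_toReal_rpow_mul_rpow_le hconv hnonneg hΨ_bdd hθ.1 hθ.2 (1 - s₁) (1 - s₂)
    using 3
  ring

theorem orlicz_section_function_log_concave
    (n : ℕ) (hn : 2 ≤ n) (Ψ : ℝ → ℝ)
    (heven : ∀ x, Ψ (-x) = Ψ x)
    (hconv : ConvexOn ℝ Set.univ Ψ)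
    (hnonneg : ∀ x, 0 ≤ Ψ x)
    (hzero : ∀ x, Ψ x = 0 ↔ x = 0)
    (hmono : StrictMonoOn Ψ (Set.Ici 0))
    (invΨ : ℝ → ℝ)
    (hinv : ∀ s : ℝ, 0 ≤ s → 0 ≤ invΨ s ∧ Ψ (invΨ s) = s)
    (f : ℝ → ℝ)
    (hf : ∀ t, f t =
      (volume {y : Fin (n - 1) → ℝ | Ψ t + ∑ i, Ψ (y i) ≤ 1}).toReal) :
    ∀ s₁ s₂ θ : ℝ, s₁ ∈ Set.Icc (0 : ℝ) 1 → s₂ ∈ Set.Icc (0 : ℝ) 1 →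
      θ ∈ Set.Ioo (0 : ℝ) 1 →
      f (invΨ s₁) ^ (1 - θ) * f (invΨ s₂) ^ θ ≤
        f (invΨ ((1 - θ) * s₁ + θ * s₂)) :=
  orlicz_section_function_log_concave_general n Ψ heven hconv hnonneg hmono invΨ hinv f hf
end

section
/- Let X be a real random variable with E[e^{tX}] < ∞ for all t ≥ 0, and suppose the function t ↦ log E[e^{√t · X}] is concave on [0,∞) and E[X] = 0. Then for all t ≥ 0, E[e^{tX}] ≤ e^{t² E[X²]/2}. -/
/-!
Write `L u = ∫ exp (u x) dμ` and `f s = log L (√s)`. Since `f` is concave with `f 0 = 0`, its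
secant slope `f s / s` is antitone, so for `0 < u ≤ t`
`log L t / t² ≤ log L u / u² ≤ (L u - 1) / u² = ∫ (exp (u x) - 1 - u x) / u² dμ`,
the last step using `E X = 0`. As `u → 0⁺` the right-hand side tends to `E X² / 2` by dominated
convergence, with the dominating function `x² (2 + exp x)`.
-/

open MeasureTheory Real Set Filter Topology ProbabilityTheory

theorem ConcaveOn.div_le_div_of_map_zero {f : ℝ → ℝ} (hf : ConcaveOn ℝ (Ici 0) f)
    (h0 : f 0 = 0) {s t : ℝ} (hs : 0 < s) (hst : s ≤ t) : f t / t ≤ f s / s := by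
  have h := hf.neg.secant_mono (a := 0) self_mem_Ici hs.le (hs.trans_le hst).le hs.ne'
    (hs.trans_le hst).ne' hst
  simp only [Pi.neg_apply, h0, neg_zero, sub_zero, neg_div] at h
  exact neg_le_neg_iff.mp h

namespace Real

theorem exp_sub_one_sub_le_sq_mul (y : ℝ) : exp y - 1 - y ≤ y ^ 2 * (1 + exp y) := by
  have hexp := exp_pos y
  rcases le_or_gt |y| 1 with hy | hy
  · have := (abs_le.mp (abs_exp_sub_one_sub_id_le hy)).2
    nlinarith
  · have hy2 : 1 < y ^ 2 := by nlinarith [sq_abs y]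
    rcases le_or_gt y 0 with hneg | hpos
    · have : y ≤ -1 := by rw [abs_of_nonpos hneg] at hy; linarith
      nlinarith [exp_le_one_iff.mpr hneg]
    · nlinarith

theorem abs_exp_sub_one_sub_id_sub_sq_div_two_le {y : ℝ} (hy : |y| ≤ 1) :
    |exp y - 1 - y - y ^ 2 / 2| ≤ |y| ^ 3 := by
  have h := exp_bound hy (n := 3) (by norm_num)
  norm_num [Finset.sum_range_succ, Nat.factorial] at h
  calc |exp y - 1 - y - y ^ 2 / 2| = |exp y - (1 + y + y ^ 2 / 2)| := by ring_nf
    _ ≤ |y| ^ 3 * (2 / 9) := h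
    _ ≤ |y| ^ 3 := by nlinarith [pow_nonneg (abs_nonneg y) 3]

end Real

theorem tendsto_exp_mul_sub_one_sub_div_sq (x : ℝ) :
    Tendsto (fun u => (exp (u * x) - 1 - u * x) / u ^ 2) (𝓝[>] 0) (𝓝 (x ^ 2 / 2)) := by
  have hsmall : ∀ᶠ u in 𝓝[>] (0 : ℝ), |u * x| ≤ 1 := nhdsWithin_le_nhds <|
    ((by fun_prop : Continuous fun u : ℝ => |u * x|).tendsto' 0 0 (by simp)).eventually
      (ge_mem_nhds one_pos)
  have hlin : Tendsto (fun u : ℝ => u * |x| ^ 3) (𝓝[>] 0) (𝓝 0) :=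
    ((by fun_prop : Continuous fun u : ℝ => u * |x| ^ 3).tendsto' 0 0 (by simp)).mono_left
      nhdsWithin_le_nhds
  refine tendsto_sub_nhds_zero_iff.mp (squeeze_zero_norm' ?_ hlin)
  filter_upwards [hsmall, self_mem_nhdsWithin] with u hux (hu : 0 < u)
  have hu2 : 0 < u ^ 2 := by positivity
  rw [norm_eq_abs, div_sub' hu2.ne', abs_div, abs_of_pos hu2, div_le_iff₀ hu2]
  calc |exp (u * x) - 1 - u * x - u ^ 2 * (x ^ 2 / 2)|
        = |exp (u * x) - 1 - u * x - (u * x) ^ 2 / 2| := by ring_nf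
    _ ≤ |u * x| ^ 3 := abs_exp_sub_one_sub_id_sub_sq_div_two_le hux
    _ = u * |x| ^ 3 * u ^ 2 := by rw [abs_mul, abs_of_pos hu]; ring

variable {μ : Measure ℝ}

theorem tendsto_integral_exp_mul_sub_one_sub_div_sq [IsFiniteMeasure μ]
    (hexp : Integrable (fun x => exp (2 * x)) μ) (hsq : Integrable (fun x => x ^ 2) μ) :
    Tendsto (fun u => ∫ x, (exp (u * x) - 1 - u * x) / u ^ 2 ∂μ) (𝓝[>] 0)
      (𝓝 (∫ x, x ^ 2 / 2 ∂μ)) := by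
  have hbound : Integrable (fun x => x ^ 2 * (2 + exp x)) μ := by
    have := integrable_pow_mul_exp_of_integrable_exp_mul (μ := μ) (X := fun x => x) (v := 1)
      one_ne_zero (by norm_num [hexp]) (by simp) 2
    refine ((hsq.const_mul 2).add this).congr (ae_of_all _ fun x => ?_)
    simp only [Pi.add_apply, one_mul]
    ring
  refine tendsto_integral_filter_of_dominated_convergence _ ?_ ?_ hbound
    (ae_of_all _ tendsto_exp_mul_sub_one_sub_div_sq)
  · exact Eventually.of_forall fun u => by fun_prop
  · filter_upwards [Ioc_mem_nhdsGT one_pos] with u ⟨hu0, hu1⟩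
    refine ae_of_all _ fun x => ?_
    have hnonneg : 0 ≤ exp (u * x) - 1 - u * x := by linarith [add_one_le_exp (u * x)]
    have hexp_le : exp (u * x) ≤ 1 + exp x := by
      rcases le_or_gt x 0 with hx | hx
      · linarith [exp_le_one_iff.mpr (mul_nonpos_of_nonneg_of_nonpos hu0.le hx), exp_pos x]
      · linarith [exp_le_exp.mpr (mul_le_of_le_one_left hx.le hu1)]
    rw [norm_div, norm_of_nonneg hnonneg, norm_pow, norm_of_nonneg hu0.le,
      div_le_iff₀ (by positivity)]
    calc exp (u * x) - 1 - u * x ≤ (u * x) ^ 2 * (1 + exp (u * x)) :=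
          exp_sub_one_sub_le_sq_mul _
      _ ≤ (u * x) ^ 2 * (2 + exp x) := mul_le_mul_of_nonneg_left (by linarith) (sq_nonneg _)
      _ = x ^ 2 * (2 + exp x) * u ^ 2 := by ring

theorem tendsto_integral_exp_mul_sub_one_div_sq [IsProbabilityMeasure μ]
    (hexp : Integrable (fun x => exp (2 * x)) μ) (hsq : Integrable (fun x => x ^ 2) μ)
    (hmean : ∫ x, x ∂μ = 0) :
    Tendsto (fun u => ((∫ x, exp (u * x) ∂μ) - 1) / u ^ 2) (𝓝[>] 0)
      (𝓝 (∫ x, x ^ 2 / 2 ∂μ)) := by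
  have hid : Integrable (fun x : ℝ => x) μ :=
    ((memLp_two_iff_integrable_sq aestronglyMeasurable_id).mpr hsq).integrable one_le_two
  refine (tendsto_integral_exp_mul_sub_one_sub_div_sq hexp hsq).congr' ?_
  filter_upwards [Ioc_mem_nhdsGT two_pos] with u ⟨hu0, hu_le⟩
  have hu : Integrable (fun x => exp (u * x)) μ :=
    integrable_exp_mul_of_nonneg_of_le (X := id) hexp hu0.le hu_le
  rw [integral_div, integral_sub (by exact hu.sub (integrable_const 1)) (hid.const_mul u),
    integral_sub hu (integrable_const 1), integral_const_mul, hmean]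
  simp

theorem log_integral_exp_mul_div_sq_le [IsProbabilityMeasure μ]
    (hconc : ConcaveOn ℝ (Ici 0) (fun s => log (∫ x, exp (√s * x) ∂μ)))
    {u t : ℝ} (hu : 0 < u) (hut : u ≤ t) :
    log (∫ x, exp (t * x) ∂μ) / t ^ 2 ≤ log (∫ x, exp (u * x) ∂μ) / u ^ 2 := by
  have h := hconc.div_le_div_of_map_zero (by simp) (pow_pos hu 2) (pow_le_pow_left₀ hu.le hut 2)
  rwa [sqrt_sq hu.le, sqrt_sq (hu.le.trans hut)] at h

theorem mgf_le_of_sqrt_log_concave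
    (μ : Measure ℝ) [IsProbabilityMeasure μ]
    (hint : ∀ t : ℝ, 0 ≤ t → Integrable (fun x => Real.exp (t * x)) μ)
    (hsq : Integrable (fun x : ℝ => x ^ 2) μ)
    (hconc : ConcaveOn ℝ (Set.Ici 0)
      (fun t => Real.log (∫ x, Real.exp (Real.sqrt t * x) ∂μ)))
    (hmean : ∫ x, x ∂μ = 0) :
    ∀ t : ℝ, 0 ≤ t →
      ∫ x, Real.exp (t * x) ∂μ ≤ Real.exp (t ^ 2 * (∫ x, x ^ 2 ∂μ) / 2) := by
  intro t ht
  rcases ht.eq_or_lt with rfl | htpos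
  · simp
  have hbound : ∀ u ∈ Ioc 0 t,
      log (∫ x, exp (t * x) ∂μ) ≤ t ^ 2 * (((∫ x, exp (u * x) ∂μ) - 1) / u ^ 2) := by
    rintro u ⟨hu, hut⟩
    calc log (∫ x, exp (t * x) ∂μ) = t ^ 2 * (log (∫ x, exp (t * x) ∂μ) / t ^ 2) := by
          field_simp
      _ ≤ t ^ 2 * (log (∫ x, exp (u * x) ∂μ) / u ^ 2) :=
          mul_le_mul_of_nonneg_left (log_integral_exp_mul_div_sq_le hconc hu hut) (sq_nonneg t)
      _ ≤ t ^ 2 * (((∫ x, exp (u * x) ∂μ) - 1) / u ^ 2) := by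
          gcongr; exact log_le_sub_one_of_pos (integral_exp_pos (hint u hu.le))
  have hlog : log (∫ x, exp (t * x) ∂μ) ≤ t ^ 2 * ∫ x, x ^ 2 / 2 ∂μ := by
    refine ge_of_tendsto
      ((tendsto_integral_exp_mul_sub_one_div_sq (hint 2 zero_le_two) hsq hmean).const_mul _) ?_
    filter_upwards [Ioc_mem_nhdsGT htpos] using hbound
  calc ∫ x, exp (t * x) ∂μ = exp (log (∫ x, exp (t * x) ∂μ)) :=
        (exp_log (integral_exp_pos (hint t ht))).symm
    _ ≤ exp (t ^ 2 * (∫ x, x ^ 2 ∂μ) / 2) := by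
        rw [integral_div, ← mul_div_assoc] at hlog
        exact exp_le_exp.mpr hlog
end
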